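/- arXiv:1904.04607 — 4 statements merged into one kernel-verified Lean document; each statement's English description precedes it below -/
import Mathlib

section
/- Let F be a distribution function on (0,∞) with F(x) < 1 for all x, and let (X_i) be i.i.d. with distribution F. Then F is subexponential if and only if both of the following hold: (i) F is long-tailed, i.e. F̄(x+y)/F̄(x) → 1 as x → ∞ for every real y; and (ii) there exists a sequence γ_n → ∞ such that limsup_{n→∞} sup_{x > γ_n} P(S_n > x)/(n F̄(x)) ≤ 1. -/
/-!
Everything rests on two lower bounds for the tail of a sum of independent nonnegative
variables. First, `U + V ≤ x` forces `U ≤ x` and `V ≤ x`, so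
`P(U + V > x) ≥ 1 - P(U ≤ x) P(V ≤ x)`; this gives `P(S_n > x) ≥ 1 - F(x)^n ≥ nF̄ - (nF̄)²`
and the doubling bound `P(S_{2n} > x) ≥ 2p - p²` with `p = P(S_n > x)`. Second, splitting
`{X_1 + X_2 > x}` according to `X_1 > x`, `X_1 ≤ y` or `y < X_1 ≤ x` gives
`P(S_2 > x) ≥ F̄(x) (1 + F(y)) + (F(x) - F(y)) F̄(x - y)`.

If `F` is subexponential, dividing the second bound by `F̄(x)` and using `P(S_2 > x) ~ 2F̄(x)`
squeezes `F̄(x - y) / F̄(x)` to `1`, and `γ_n` is read off the convergence at each `n`.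
Conversely, the first bound gives the lower half of `P(S_n > x) ~ nF̄(x)`. If the upper half
failed at some `n`, with ratio above `1 + ε` for arbitrarily large `x`, then along such `x`
(where `F̄(x)` is small) the doubling bound would keep the ratio at `n 2^j` above `1 + ε/2` for
every `j`, contradicting the uniform bound beyond `γ_{n 2^j}` for `j` large.
-/

open MeasureTheory ProbabilityTheory Filter Topology Real

/-- The partial sum `S_n = X_1 + ⋯ + X_n`. -/
noncomputable def partialSum {Ω : Type*} (X : ℕ → Ω → ℝ) (n : ℕ) (ω : Ω) : ℝ :=
  ∑ i ∈ Finset.range n, X i ω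

section TailAnalysis

variable {t : ℝ → ℝ}

def IsLongTailed (t : ℝ → ℝ) : Prop :=
  ∀ y, Tendsto (fun x => t (x + y) / t x) atTop (𝓝 1)

lemma mul_sub_sq_le_one_sub_one_sub_pow {q : ℝ} (hq0 : 0 ≤ q) (hq1 : q ≤ 1) (n : ℕ) :
    n * q - (n * q) ^ 2 ≤ 1 - (1 - q) ^ n := by
  have hbern : 1 - n * q ≤ (1 - q) ^ n := by
    simpa [sub_eq_add_neg] using one_add_mul_le_pow (a := -q) (by linarith) n
  have hprod : (1 - q) ^ n * (1 + q) ^ n ≤ 1 := by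
    rw [← mul_pow]; exact pow_le_one₀ (by nlinarith) (by nlinarith)
  have h : (1 - q) ^ n * (1 + n * q) ≤ 1 :=
    (mul_le_mul_of_nonneg_left (one_add_mul_le_pow (by linarith) n)
      (pow_nonneg (by linarith) n)).trans hprod
  nlinarith [mul_le_mul_of_nonneg_right hbern (by positivity : (0 : ℝ) ≤ n * q)]

lemma tendsto_sub_div_of_split_le {s : ℝ → ℝ} (hanti : Antitone t) (hpos : ∀ x, 0 < t x)
    (ht0 : Tendsto t atTop (𝓝 0)) (hs : Tendsto (fun x => s x / t x) atTop (𝓝 2)) {y : ℝ}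
    (hy : 0 ≤ y) (hsplit : ∀ x, y ≤ x → t x + (1 - t y) * t x + (t y - t x) * t (x - y) ≤ s x) :
    Tendsto (fun x => t (x - y) / t x) atTop (𝓝 1) := by
  have hupper : Tendsto (fun x => (s x / t x - (2 - t y)) / (t y - t x)) atTop (𝓝 1) := by
    have := (hs.sub_const (2 - t y)).div (ht0.const_sub (t y)) (by simpa using (hpos y).ne')
    rwa [sub_sub_cancel, sub_zero, div_self (hpos y).ne'] at this
  refine tendsto_of_tendsto_of_tendsto_of_le_of_le' tendsto_const_nhds hupper ?_ ?_
  · filter_upwards [eventually_ge_atTop y] with x hx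
    rw [le_div_iff₀ (hpos x), one_mul]
    exact hanti (by linarith)
  · filter_upwards [eventually_ge_atTop y, ht0.eventually_lt_const (hpos y)] with x hx htx
    rw [div_le_div_iff₀ (hpos x) (sub_pos.2 htx), sub_mul, div_mul_cancel₀ _ (hpos x).ne']
    linarith [hsplit x hx]

lemma isLongTailed_of_tendsto_sub_div
    (h : ∀ y, 0 ≤ y → Tendsto (fun x => t (x - y) / t x) atTop (𝓝 1)) : IsLongTailed t := by
  intro y
  rcases le_total y 0 with hy | hy
  · simpa using h (-y) (by linarith)
  · have := ((h y hy).comp (tendsto_atTop_add_const_right atTop y tendsto_id)).inv₀ one_ne_zero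
    simpa using this

lemma exists_tendsto_atTop_forall_gt_le {r : ℕ → ℝ → ℝ}
    (hr : ∀ᶠ n in atTop, Tendsto (r n) atTop (𝓝 1)) :
    ∃ γ : ℕ → ℝ, Tendsto γ atTop atTop ∧
      ∀ ε > (0 : ℝ), ∀ᶠ n in atTop, ∀ x, γ n < x → r n x ≤ 1 + ε := by
  have hM (n : ℕ) : ∃ M : ℝ, Tendsto (r n) atTop (𝓝 1) →
      ∀ x, M ≤ x → r n x ≤ 1 + 1 / ((n : ℝ) + 1) := by
    by_cases h : Tendsto (r n) atTop (𝓝 1)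
    · obtain ⟨M, hM⟩ := eventually_atTop.1 (h.eventually_le_const
        (lt_add_of_pos_right 1 (by positivity : (0 : ℝ) < 1 / ((n : ℝ) + 1))))
      exact ⟨M, fun _ => hM⟩
    · exact ⟨0, fun h' => absurd h' h⟩
  choose M hM using hM
  refine ⟨fun n => max n (M n),
    tendsto_atTop_mono (fun n => le_max_left _ _) tendsto_natCast_atTop_atTop, fun ε hε => ?_⟩
  filter_upwards [hr, tendsto_one_div_add_atTop_nhds_zero_nat.eventually_le_const hε]
    with n hn hnε x hx
  exact (hM n hn x ((le_max_right _ _).trans hx.le)).trans (by linarith)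

lemma tendsto_of_le_of_forall_eventually_le_add {α : Type*} {l : Filter α} {f g : α → ℝ}
    {a : ℝ} (hf : Tendsto f l (𝓝 a)) (hfg : ∀ x, f x ≤ g x)
    (hg : ∀ ε > 0, ∀ᶠ x in l, g x ≤ a + ε) : Tendsto g l (𝓝 a) :=
  tendsto_order.2
    ⟨fun b hb => (hf.eventually (lt_mem_nhds hb)).mono fun x hx => hx.trans_le (hfg x),
      fun b hb => (hg ((b - a) / 2) (by linarith)).mono fun x hx => by linarith⟩

variable {p : ℕ → ℝ → ℝ}

-- `q ↦ 1 - (1 - q) ^ 2` is increasing on `q ≤ 1`, and equals `2 q` up to `O(q ^ 2)`.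
lemma frequently_doubling_step (htnn : ∀ x, 0 ≤ t x) (ht0 : Tendsto t atTop (𝓝 0))
    (hp1 : ∀ n x, p n x ≤ 1) (hdouble : ∀ n x, 1 - (1 - p n x) ^ 2 ≤ p (2 * n) x)
    {m : ℕ} {c c' : ℝ} (hc : c' < c) (h : ∃ᶠ x in atTop, (1 + c) * (m * t x) ≤ p m x) :
    ∃ᶠ x in atTop, (1 + c') * ((2 * m : ℕ) * t x) ≤ p (2 * m) x := by
  have hsmall : ∀ᶠ x in atTop, (1 + c) ^ 2 * (m * t x) < 2 * (c - c') := by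
    have : Tendsto (fun x => (1 + c) ^ 2 * (m * t x)) atTop (𝓝 0) := by
      simpa using (ht0.const_mul (m : ℝ)).const_mul ((1 + c) ^ 2)
    exact this.eventually_lt_const (by linarith)
  refine (h.and_eventually hsmall).mono fun x ⟨hq, hq'⟩ => ?_
  have hu : 0 ≤ (m : ℝ) * t x := mul_nonneg m.cast_nonneg (htnn x)
  calc (1 + c') * ((2 * m : ℕ) * t x) ≤ 1 - (1 - (1 + c) * (m * t x)) ^ 2 := by
        push_cast; nlinarith
    _ ≤ 1 - (1 - p m x) ^ 2 := by nlinarith [hp1 m x]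
    _ ≤ p (2 * m) x := hdouble m x

lemma eventually_div_le_of_doubling {γ : ℕ → ℝ} (htpos : ∀ x, 0 < t x)
    (ht0 : Tendsto t atTop (𝓝 0)) (hp1 : ∀ n x, p n x ≤ 1)
    (hdouble : ∀ n x, 1 - (1 - p n x) ^ 2 ≤ p (2 * n) x)
    (hsup : ∀ ε > (0 : ℝ), ∀ᶠ n in atTop, ∀ x, γ n < x → p n x / (n * t x) ≤ 1 + ε)
    {n : ℕ} (hn : n ≠ 0) {ε : ℝ} (hε : 0 < ε) :
    ∀ᶠ x in atTop, p n x / (n * t x) ≤ 1 + ε := by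
  by_contra hcon
  -- excess ratios `c j` decreasing from `ε` to `ε / 2`, one for each doubling
  set c : ℕ → ℝ := fun j => ε / 2 * (1 + 2⁻¹ ^ j) with hc
  have hn' : (0 : ℝ) < n := Nat.cast_pos.2 (Nat.pos_of_ne_zero hn)
  have hfreq (j : ℕ) : ∃ᶠ x in atTop, (1 + c j) * ((n * 2 ^ j : ℕ) * t x) ≤ p (n * 2 ^ j) x := by
    induction j with
    | zero =>
      refine (not_eventually.1 hcon).mono fun x hx => ?_
      rw [not_le, lt_div_iff₀ (mul_pos hn' (htpos x))] at hx
      have hc0 : c 0 = ε := by simp only [hc]; ring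
      simpa [hc0] using hx.le
    | succ j ih =>
      rw [pow_succ, ← mul_assoc, mul_comm _ 2]
      refine frequently_doubling_step (fun x => (htpos x).le) ht0 hp1 hdouble ?_ ih
      have : (2⁻¹ : ℝ) ^ (j + 1) < 2⁻¹ ^ j :=
        pow_lt_pow_right_of_lt_one₀ (by norm_num) (by norm_num) j.lt_succ_self
      exact mul_lt_mul_of_pos_left (by linarith) (half_pos hε)
  obtain ⟨N, hN⟩ := eventually_atTop.1 (hsup (ε / 2) (half_pos hε))
  have hm : N ≤ n * 2 ^ N :=
    N.lt_two_pow_self.le.trans (Nat.le_mul_of_pos_left _ (Nat.pos_of_ne_zero hn))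
  obtain ⟨x, hx, hγ⟩ := ((hfreq N).and_eventually (eventually_gt_atTop (γ (n * 2 ^ N)))).exists
  have hpos : 0 < ((n * 2 ^ N : ℕ) : ℝ) * t x := by
    have := htpos x
    positivity
  have hle := hN _ hm x hγ
  rw [div_le_iff₀ hpos] at hle
  have hcN : ε / 2 < c N := by simp only [hc]; nlinarith [pow_pos (by norm_num : (0 : ℝ) < 2⁻¹) N]
  nlinarith

end TailAnalysis

section Tail

variable {Ω : Type*} {mΩ : MeasurableSpace Ω} {μ : Measure Ω} {f g : Ω → ℝ}

noncomputable def tail (μ : Measure Ω) (f : Ω → ℝ) (x : ℝ) : ℝ := μ.real {ω | x < f ω}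

lemma tail_nonneg (x : ℝ) : 0 ≤ tail μ f x := measureReal_nonneg

lemma tail_le_one [IsProbabilityMeasure μ] (x : ℝ) : tail μ f x ≤ 1 := measureReal_le_one

lemma antitone_tail [IsFiniteMeasure μ] : Antitone (tail μ f) :=
  fun _ _ hxy => measureReal_mono fun _ hω => lt_of_le_of_lt hxy hω

lemma ProbabilityTheory.IdentDistrib.tail_eq {ν : Measure Ω} (h : IdentDistrib f g μ ν) :
    tail μ f = tail ν g :=
  funext fun x => by
    simp only [tail, measureReal_def]
    exact congrArg _ (h.measure_mem_eq measurableSet_Ioi)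

lemma measureReal_preimage_Iic_eq_one_sub_tail [IsProbabilityMeasure μ] (hf : Measurable f)
    (x : ℝ) : μ.real (f ⁻¹' Set.Iic x) = 1 - tail μ f x := by
  rw [tail, ← probReal_compl_eq_one_sub (measurableSet_lt measurable_const hf)]
  congr 1; ext; simp

lemma tendsto_tail_atTop [IsProbabilityMeasure μ] (hf : Measurable f) :
    Tendsto (tail μ f) atTop (𝓝 0) := by
  have := Measure.isProbabilityMeasure_map (μ := μ) hf.aemeasurable
  have h : tail μ f = fun x => 1 - cdf (μ.map f) x := by
    ext x
    rw [cdf_eq_real, map_measureReal_apply hf measurableSet_Iic,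
      measureReal_preimage_Iic_eq_one_sub_tail hf, sub_sub_cancel]
  simpa [h] using (tendsto_cdf_atTop (μ.map f)).const_sub 1

lemma ProbabilityTheory.IndepFun.measureReal_inter_preimage_eq_mul (h : IndepFun f g μ)
    {s t : Set ℝ} (hs : MeasurableSet s) (ht : MeasurableSet t) :
    μ.real (f ⁻¹' s ∩ g ⁻¹' t) = μ.real (f ⁻¹' s) * μ.real (g ⁻¹' t) := by
  simp only [measureReal_def, h.measure_inter_preimage_eq_mul _ _ hs ht, ENNReal.toReal_mul]

variable [IsProbabilityMeasure μ]

lemma one_sub_mul_le_tail_add (hfg : IndepFun f g μ) (hf : Measurable f) (hg : Measurable g)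
    (hf0 : ∀ ω, 0 ≤ f ω) (hg0 : ∀ ω, 0 ≤ g ω) (x : ℝ) :
    1 - (1 - tail μ f x) * (1 - tail μ g x) ≤ tail μ (f + g) x := by
  have hsub : (f + g) ⁻¹' Set.Iic x ⊆ f ⁻¹' Set.Iic x ∩ g ⁻¹' Set.Iic x :=
    fun ω (hω : f ω + g ω ≤ x) =>
      ⟨show f ω ≤ x by linarith [hg0 ω], show g ω ≤ x by linarith [hf0 ω]⟩
  have hle := measureReal_mono (μ := μ) hsub
  rw [hfg.measureReal_inter_preimage_eq_mul measurableSet_Iic measurableSet_Iic,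
    measureReal_preimage_Iic_eq_one_sub_tail (hf.add hg),
    measureReal_preimage_Iic_eq_one_sub_tail hf, measureReal_preimage_Iic_eq_one_sub_tail hg] at hle
  linarith

lemma split_le_tail_add (hfg : IndepFun f g μ) (hf : Measurable f) (hg : Measurable g)
    (hf0 : ∀ ω, 0 ≤ f ω) (hg0 : ∀ ω, 0 ≤ g ω) {x y : ℝ} (hyx : y ≤ x) :
    tail μ f x + (1 - tail μ f y) * tail μ g x + (tail μ f y - tail μ f x) * tail μ g (x - y)
      ≤ tail μ (f + g) x := by
  set A := f ⁻¹' Set.Ioi x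
  set B := f ⁻¹' Set.Iic y ∩ g ⁻¹' Set.Ioi x
  set C := f ⁻¹' Set.Ioc y x ∩ g ⁻¹' Set.Ioi (x - y)
  have hB : MeasurableSet B := (hf measurableSet_Iic).inter (hg measurableSet_Ioi)
  have hC : MeasurableSet C := (hf measurableSet_Ioc).inter (hg measurableSet_Ioi)
  have hAB : Disjoint A B := Set.disjoint_left.2 fun ω (hA : x < f ω) hB => by
    linarith [show f ω ≤ y from hB.1]
  have hABC : Disjoint (A ∪ B) C := Set.disjoint_union_left.2
    ⟨Set.disjoint_left.2 fun ω (hA : x < f ω) hC => by linarith [hC.1.2],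
     Set.disjoint_left.2 fun ω hB hC => by linarith [show f ω ≤ y from hB.1, hC.1.1]⟩
  have hsub : A ∪ B ∪ C ⊆ {ω | x < (f + g) ω} := by
    rintro ω ((hA | hB) | hC) <;> change x < f ω + g ω
    · linarith [hg0 ω, show x < f ω from hA]
    · linarith [hf0 ω, show x < g ω from hB.2]
    · linarith [show y < f ω from hC.1.1, show x - y < g ω from hC.2]
  have hIoc : μ.real (f ⁻¹' Set.Ioc y x) = tail μ f y - tail μ f x := by
    rw [← Set.Ioi_sdiff_Ioi, Set.preimage_sdiff,
      measureReal_sdiff (Set.preimage_mono (Set.Ioi_subset_Ioi hyx)) (hf measurableSet_Ioi)]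
    rfl
  have hIic : μ.real (f ⁻¹' Set.Iic y) = 1 - tail μ f y :=
    measureReal_preimage_Iic_eq_one_sub_tail hf y
  calc _ = μ.real A + μ.real B + μ.real C := by
        rw [hfg.measureReal_inter_preimage_eq_mul measurableSet_Iic measurableSet_Ioi,
          hfg.measureReal_inter_preimage_eq_mul measurableSet_Ioc measurableSet_Ioi, hIoc, hIic]
        rfl
    _ = μ.real (A ∪ B ∪ C) := by rw [measureReal_union hABC hC, measureReal_union hAB hB]
    _ ≤ tail μ (f + g) x := measureReal_mono hsub

end Tail

section PartialSum

variable {Ω : Type*} {mΩ : MeasurableSpace Ω} {μ : Measure Ω} {X : ℕ → Ω → ℝ}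

lemma measurable_partialSum (hmeas : ∀ i, Measurable (X i)) (n : ℕ) :
    Measurable (partialSum X n) :=
  Finset.measurable_sum _ fun i _ => hmeas i

lemma partialSum_nonneg (hnonneg : ∀ i ω, 0 ≤ X i ω) (n : ℕ) (ω : Ω) : 0 ≤ partialSum X n ω :=
  Finset.sum_nonneg fun i _ => hnonneg i ω

lemma partialSum_add (m n : ℕ) :
    partialSum X (m + n) = partialSum X m + partialSum (fun i => X (m + i)) n :=
  funext fun ω => Finset.sum_range_add (X · ω) m n

lemma partialSum_one : partialSum X 1 = X 0 :=
  funext fun ω => by simp [partialSum]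

lemma partialSum_two : partialSum X 2 = X 0 + X 1 :=
  funext fun ω => by simp [partialSum, Finset.sum_range_succ]

lemma indepFun_partialSum_shift (hmeas : ∀ i, Measurable (X i)) (hindep : iIndepFun X μ)
    (m n : ℕ) : IndepFun (partialSum X m) (partialSum (fun i => X (m + i)) n) μ := by
  have hsum (s : Finset ℕ) : Measurable fun v : s → ℝ => ∑ i, v i :=
    Finset.measurable_sum _ fun i _ => measurable_pi_apply i
  have h := (hindep.indepFun_finset (Finset.range m) (Finset.Ico m (m + n))
    (Finset.disjoint_left.2 fun i hi hi' => by simp at hi hi'; omega) hmeas).comp (hsum _) (hsum _)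
  convert h using 1 <;> funext ω
  · exact (Finset.sum_coe_sort (Finset.range m) (X · ω)).symm
  · simp only [Function.comp_apply, partialSum]
    rw [Finset.sum_coe_sort (Finset.Ico m (m + n)) (X · ω), Finset.sum_Ico_eq_sum_range,
      Nat.add_sub_cancel_left]

lemma identDistrib_partialSum_shift (hindep : iIndepFun X μ)
    (hident : ∀ i, IdentDistrib (X i) (X 0) μ μ) (m n : ℕ) :
    IdentDistrib (partialSum (fun i => X (m + i)) n) (partialSum X n) μ μ := by
  have h := IdentDistrib.pi (fun i => (hident (m + i)).trans (hident i).symm)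
    (hindep.precomp (add_right_injective m)) hindep
  exact h.comp (Finset.measurable_sum _ fun i _ => measurable_pi_apply i)

variable [IsProbabilityMeasure μ]

lemma one_sub_pow_le_tail_partialSum (hmeas : ∀ i, Measurable (X i)) (hindep : iIndepFun X μ)
    (hident : ∀ i, IdentDistrib (X i) (X 0) μ μ) (hnonneg : ∀ i ω, 0 ≤ X i ω) (n : ℕ) (x : ℝ) :
    1 - (1 - tail μ (X 0) x) ^ n ≤ tail μ (partialSum X n) x := by
  induction n with
  | zero => simpa using tail_nonneg x
  | succ n ih =>
    have hstep := one_sub_mul_le_tail_add (indepFun_partialSum_shift hmeas hindep n 1)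
      (measurable_partialSum hmeas n) (measurable_partialSum (fun i => hmeas (n + i)) 1)
      (partialSum_nonneg hnonneg n) (partialSum_nonneg (fun i => hnonneg (n + i)) 1) x
    rw [← partialSum_add, (identDistrib_partialSum_shift hindep hident n 1).tail_eq,
      partialSum_one] at hstep
    have h1 : 0 ≤ 1 - tail μ (X 0) x := sub_nonneg.2 (tail_le_one x)
    calc 1 - (1 - tail μ (X 0) x) ^ (n + 1)
        ≤ 1 - (1 - tail μ (partialSum X n) x) * (1 - tail μ (X 0) x) := by
          rw [pow_succ]; gcongr; linarith
      _ ≤ _ := hstep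

lemma one_sub_sq_le_tail_partialSum_two_mul (hmeas : ∀ i, Measurable (X i))
    (hindep : iIndepFun X μ) (hident : ∀ i, IdentDistrib (X i) (X 0) μ μ)
    (hnonneg : ∀ i ω, 0 ≤ X i ω) (n : ℕ) (x : ℝ) :
    1 - (1 - tail μ (partialSum X n) x) ^ 2 ≤ tail μ (partialSum X (2 * n)) x := by
  have h := one_sub_mul_le_tail_add (indepFun_partialSum_shift hmeas hindep n n)
    (measurable_partialSum hmeas n) (measurable_partialSum (fun i => hmeas (n + i)) n)
    (partialSum_nonneg hnonneg n) (partialSum_nonneg (fun i => hnonneg (n + i)) n) x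
  rwa [← partialSum_add, (identDistrib_partialSum_shift hindep hident n n).tail_eq, ← sq,
    ← two_mul] at h

end PartialSum

section Subexponential

variable {Ω : Type*} {mΩ : MeasurableSpace Ω} {μ : Measure Ω} [IsProbabilityMeasure μ]
  {X : ℕ → Ω → ℝ}

lemma isLongTailed_of_tendsto_two (hmeas : ∀ i, Measurable (X i)) (hindep : iIndepFun X μ)
    (hident : ∀ i, IdentDistrib (X i) (X 0) μ μ) (hnonneg : ∀ i ω, 0 ≤ X i ω)
    (hpos : ∀ x, 0 < tail μ (X 0) x)
    (h2 : Tendsto (fun x => tail μ (partialSum X 2) x / (2 * tail μ (X 0) x)) atTop (𝓝 1)) :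
    IsLongTailed (tail μ (X 0)) := by
  refine isLongTailed_of_tendsto_sub_div fun y hy =>
    tendsto_sub_div_of_split_le (s := tail μ (partialSum X 2)) antitone_tail hpos
      (tendsto_tail_atTop (hmeas 0)) ?_ hy fun x hx => ?_
  · simpa [mul_div_assoc', mul_div_mul_left] using h2.const_mul 2
  · have := split_le_tail_add (hindep.indepFun zero_ne_one) (hmeas 0) (hmeas 1) (hnonneg 0)
      (hnonneg 1) hx
    rwa [(hident 1).tail_eq, ← partialSum_two] at this

lemma tendsto_tail_partialSum_div_of_forall_eventually_le {γ : ℕ → ℝ}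
    (hmeas : ∀ i, Measurable (X i)) (hindep : iIndepFun X μ)
    (hident : ∀ i, IdentDistrib (X i) (X 0) μ μ) (hnonneg : ∀ i ω, 0 ≤ X i ω)
    (hpos : ∀ x, 0 < tail μ (X 0) x)
    (hsup : ∀ ε > (0 : ℝ), ∀ᶠ n in atTop, ∀ x, γ n < x →
      tail μ (partialSum X n) x / (n * tail μ (X 0) x) ≤ 1 + ε)
    {n : ℕ} (hn : n ≠ 0) :
    Tendsto (fun x => tail μ (partialSum X n) x / (n * tail μ (X 0) x)) atTop (𝓝 1) := by
  have ht0 := tendsto_tail_atTop (μ := μ) (hmeas 0)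
  refine tendsto_of_le_of_forall_eventually_le_add (f := fun x => 1 - n * tail μ (X 0) x)
    (by simpa using (ht0.const_mul (n : ℝ)).const_sub 1) (fun x => ?_)
    fun ε hε => eventually_div_le_of_doubling hpos ht0 (fun _ _ => tail_le_one _)
      (one_sub_sq_le_tail_partialSum_two_mul hmeas hindep hident hnonneg) hsup hn hε
  have hnt : 0 < n * tail μ (X 0) x := mul_pos (Nat.cast_pos.2 (Nat.pos_of_ne_zero hn)) (hpos x)
  rw [le_div_iff₀ hnt]
  calc (1 - n * tail μ (X 0) x) * (n * tail μ (X 0) x)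
      = n * tail μ (X 0) x - (n * tail μ (X 0) x) ^ 2 := by ring
    _ ≤ 1 - (1 - tail μ (X 0) x) ^ n :=
      mul_sub_sq_le_one_sub_one_sub_pow (tail_nonneg x) (tail_le_one x) n
    _ ≤ tail μ (partialSum X n) x := one_sub_pow_le_tail_partialSum hmeas hindep hident hnonneg n x

end Subexponential

/-- Let `F` (the common distribution of the i.i.d. nonnegative
sequence `(X_i)`, with `F(x) < 1` for all `x`) be a distribution on `(0,∞)`. Then `F` is
subexponential (i.e. `P(S_n > x)/(n F̄(x)) → 1` as `x → ∞` for every `n ≥ 2`)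
if and only if both:
(i) `F` is long-tailed: `F̄(x+y)/F̄(x) → 1` as `x → ∞` for every real `y`; and
(ii) there exists `γ_n → ∞` with `limsup_n sup_{x > γ_n} P(S_n > x)/(n F̄(x)) ≤ 1`. -/
theorem stmt2 {Ω : Type*} [MeasureSpace Ω] [IsProbabilityMeasure (ℙ : Measure Ω)]
    (X : ℕ → Ω → ℝ) (hmeas : ∀ i, Measurable (X i))
    (hindep : iIndepFun X ℙ)
    (hident : ∀ i, IdentDistrib (X i) (X 0) ℙ ℙ)
    (hnonneg : ∀ i ω, 0 ≤ X i ω)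
    (htail_pos : ∀ x : ℝ, 0 < ℙ {ω | x < X 0 ω}) :
    (∀ n : ℕ, 2 ≤ n →
        Tendsto (fun x : ℝ =>
            (ℙ {ω | x < partialSum X n ω}).toReal / (n * (ℙ {ω | x < X 0 ω}).toReal))
          atTop (𝓝 1))
      ↔ ((∀ y : ℝ,
            Tendsto (fun x : ℝ =>
                (ℙ {ω | x + y < X 0 ω}).toReal / (ℙ {ω | x < X 0 ω}).toReal)
              atTop (𝓝 1)) ∧
         (∃ γ : ℕ → ℝ, Tendsto γ atTop atTop ∧
            ∀ ε > (0 : ℝ), ∀ᶠ n : ℕ in atTop, ∀ x : ℝ, γ n < x →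
              (ℙ {ω | x < partialSum X n ω}).toReal / (n * (ℙ {ω | x < X 0 ω}).toReal)
                ≤ 1 + ε)) := by
  have hpos (x : ℝ) : 0 < tail ℙ (X 0) x :=
    ENNReal.toReal_pos (htail_pos x).ne' (measure_ne_top _ _)
  constructor
  · intro hsub
    refine ⟨isLongTailed_of_tendsto_two hmeas hindep hident hnonneg hpos ?_,
      exists_tendsto_atTop_forall_gt_le (eventually_atTop.2 ⟨2, hsub⟩)⟩
    exact_mod_cast hsub 2 le_rfl
  · rintro ⟨-, γ, -, hsup⟩ n hn
    exact tendsto_tail_partialSum_div_of_forall_eventually_le hmeas hindep hident hnonneg hpos hsup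
      (by omega)
end

section
/- Let F be a subexponential distribution function and let (X_i) be i.i.d. with distribution F. Then there exists a sequence γ_n → ∞ such that sup_{x > γ_n} | P(S_n > x)/(n F̄(x)) − 1 | → 0 as n → ∞. -/
/-! Diagonal argument: for each `n`, subexponentiality gives a threshold beyond which the
`n`-th ratio is within `1/(n+1)` of `1`; taking `γ n` to be the larger of that threshold and `n`
makes `γ` diverge while the error bound `1/(n+1)` tends to `0`. -/

open MeasureTheory ProbabilityTheory Filter Topology Real

theorem exists_tendsto_atTop_forall_dist_lt {E : Type*} [PseudoMetricSpace E]
    {f : ℕ → ℝ → E} {c : E} (hf : ∀ᶠ n in atTop, Tendsto (f n) atTop (𝓝 c)) :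
    ∃ γ : ℕ → ℝ, Tendsto γ atTop atTop ∧
      ∀ ε > 0, ∀ᶠ n in atTop, ∀ x, γ n < x → dist (f n x) c < ε := by
  have threshold : ∀ n : ℕ, ∃ a : ℝ, Tendsto (f n) atTop (𝓝 c) →
      ∀ x ≥ a, dist (f n x) c < 1 / ((n : ℝ) + 1) := by
    intro n
    by_cases hn : Tendsto (f n) atTop (𝓝 c)
    · obtain ⟨a, ha⟩ := Metric.tendsto_atTop.1 hn _ Nat.one_div_pos_of_nat
      exact ⟨a, fun _ => ha⟩
    · exact ⟨0, fun h => absurd h hn⟩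
  choose a ha using threshold
  refine ⟨fun n => max (a n) n,
    tendsto_atTop_mono (fun n => le_max_right _ _) tendsto_natCast_atTop_atTop, ?_⟩
  intro ε hε
  have hsmall : ∀ᶠ n : ℕ in atTop, 1 / ((n : ℝ) + 1) < ε :=
    tendsto_one_div_add_atTop_nhds_zero_nat.eventually (gt_mem_nhds hε)
  filter_upwards [hf, hsmall] with n hn hnε x hx
  exact (ha n hn x ((le_max_left _ _).trans hx.le)).trans hnε

theorem stmt3_general {Ω : Type*} [MeasureSpace Ω]
    (X : ℕ → Ω → ℝ)
    (hsubexp : ∀ n : ℕ, 2 ≤ n →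
      Tendsto (fun x : ℝ =>
          (ℙ {ω | x < partialSum X n ω}).toReal / (n * (ℙ {ω | x < X 0 ω}).toReal))
        atTop (𝓝 1)) :
    ∃ γ : ℕ → ℝ, Tendsto γ atTop atTop ∧
      ∀ ε > (0 : ℝ), ∀ᶠ n : ℕ in atTop, ∀ x : ℝ, γ n < x →
        |(ℙ {ω | x < partialSum X n ω}).toReal / (n * (ℙ {ω | x < X 0 ω}).toReal) - 1|
          < ε := by
  simpa only [Real.dist_eq] using
    exists_tendsto_atTop_forall_dist_lt (eventually_atTop.2 ⟨2, hsubexp⟩)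

/-- If the common distribution `F` of the i.i.d. nonnegative sequence
`(X_i)` is subexponential (i.e. `P(S_n > x)/(n F̄(x)) → 1` as `x → ∞` for every `n ≥ 2`),
then there exists a sequence `γ_n → ∞` such that
`sup_{x > γ_n} |P(S_n > x)/(n F̄(x)) - 1| → 0` as `n → ∞`. -/
theorem stmt3 {Ω : Type*} [MeasureSpace Ω] [IsProbabilityMeasure (ℙ : Measure Ω)]
    (X : ℕ → Ω → ℝ) (hmeas : ∀ i, Measurable (X i))
    (hindep : iIndepFun X ℙ)
    (hident : ∀ i, IdentDistrib (X i) (X 0) ℙ ℙ)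
    (hnonneg : ∀ i ω, 0 ≤ X i ω)
    (htail_pos : ∀ x : ℝ, 0 < ℙ {ω | x < X 0 ω})
    (hsubexp : ∀ n : ℕ, 2 ≤ n →
      Tendsto (fun x : ℝ =>
          (ℙ {ω | x < partialSum X n ω}).toReal / (n * (ℙ {ω | x < X 0 ω}).toReal))
        atTop (𝓝 1)) :
    ∃ γ : ℕ → ℝ, Tendsto γ atTop atTop ∧
      ∀ ε > (0 : ℝ), ∀ᶠ n : ℕ in atTop, ∀ x : ℝ, γ n < x →
        |(ℙ {ω | x < partialSum X n ω}).toReal / (n * (ℙ {ω | x < X 0 ω}).toReal) - 1|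
          < ε :=
  stmt3_general X hsubexp
end

section
/- Let (X_i) be i.i.d. real random variables with E[X] = 0 and Var(X) = 1 such that for some sequence γ_n → ∞, sup_{0 ≤ x < γ_n} | P(S_n/√n > x)/Φ̄(x) − 1 | → 0 and sup_{0 ≤ x < γ_n} | P(−S_n/√n > x)/Φ̄(x) − 1 | → 0 as n → ∞. Let (p_n) be any integer sequence with p = p_n → ∞ and p_n < exp(γ_n²/2), and let (S_{ni})_{i=1,...,p} be i.i.d. copies of S_n. Then for all x, y ∈ ℝ, P( max_{i=1,...,p} d_p (S_{ni}/√n − d_p) ≤ x , min_{i=1,...,p} d_p (S_{ni}/√n + d_p) ≤ y ) → Λ(x)(1 − Λ(−y)) as n → ∞, where d_p = √(2 log p) − (log log p + log 4π)/(2 (2 log p)^{1/2}) and Λ(x) = exp(−e^{−x}). -/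
open MeasureTheory ProbabilityTheory Filter Topology Real

/-- The tail `Φ̄(x) = 1 - Φ(x)` of the standard normal distribution function. -/
noncomputable def stdNormalTail (x : ℝ) : ℝ := ((gaussianReal 0 1) (Set.Ioi x)).toReal

/-- The Gumbel centering constants
`d_p = √(2 log p) − (log log p + log 4π)/(2 (2 log p)^{1/2})`. -/
noncomputable def gumbelCenter (p : ℕ) : ℝ :=
  Real.sqrt (2 * Real.log p)
    - (Real.log (Real.log p) + Real.log (4 * Real.pi)) / (2 * Real.sqrt (2 * Real.log p))

/-- The standard Gumbel distribution function `Λ(x) = exp(−e^{−x})`. -/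
noncomputable def gumbelCDF (x : ℝ) : ℝ := Real.exp (-Real.exp (-x))

/-!
By independence the event has probability `(1 - a)^p - (1 - (a + b))^p`, where
`a = P(S_n/√n > d + x/d)` and `b = P(S_n/√n ≤ -(d - y/d))`, `d = d_p`.
Since `p < exp(γ²/2)`, the levels `d + c/d` stay below `√(2 log p) < γ_n`, so the
large-deviation hypotheses make `a` and `b` asymptotic to Gaussian tails (for the closed
event in `b`, by squeezing it between strict events at nearby levels). Mills' ratio
`Φ̄(t) ∼ φ(t)/t` and the choice of `d_p` give `p Φ̄(d + c/d) → e^{-c}`, hence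
`p a → e^{-x}` and `p b → e^{y}`; finally `(1 - q/p)^p → e^{-q}`, and
`Λ(x) - exp(-e^{-x} - e^{y}) = Λ(x) (1 - Λ(-y))`.
-/

open Set Asymptotics

local notation "φ" => gaussianPDFReal 0 1

lemma gaussianPDFReal_zero_one (x : ℝ) : φ x = (√(2 * π))⁻¹ * exp (-x ^ 2 / 2) := by
  simp [gaussianPDFReal]

lemma hasDerivAt_gaussianPDFReal_zero_one (x : ℝ) : HasDerivAt φ (-x * φ x) x := by
  have h : HasDerivAt (fun u => (√(2 * π))⁻¹ * exp (-u ^ 2 / 2))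
      ((√(2 * π))⁻¹ * (exp (-x ^ 2 / 2) * (-(2 * x ^ 1) / 2))) x :=
    (((hasDerivAt_pow 2 x).neg.div_const 2).exp).const_mul _
  convert h using 1
  · exact funext gaussianPDFReal_zero_one
  · rw [gaussianPDFReal_zero_one]; ring

lemma tendsto_gaussianPDFReal_zero_one_atTop : Tendsto φ atTop (𝓝 0) := by
  have h : Tendsto (fun u : ℝ => -u ^ 2 / 2) atTop atBot :=
    (tendsto_neg_atTop_atBot.comp (tendsto_pow_atTop two_ne_zero)).atBot_div_const two_pos
  simpa [funext gaussianPDFReal_zero_one] using (tendsto_exp_atBot.comp h).const_mul (√(2 * π))⁻¹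

lemma stdNormalTail_eq_integral (t : ℝ) : stdNormalTail t = ∫ u in Ioi t, φ u := by
  rw [stdNormalTail, gaussianReal_apply_eq_integral 0 one_ne_zero,
    ENNReal.toReal_ofReal (integral_nonneg fun u => gaussianPDFReal_nonneg 0 1 u)]

lemma stdNormalTail_le {t : ℝ} (ht : 0 < t) : stdNormalTail t ≤ φ t / t := by
  have hderiv : ∀ u ∈ Ici t, HasDerivAt (fun v => -φ v) (u * φ u) u := fun u _ =>
    (hasDerivAt_gaussianPDFReal_zero_one u).neg.congr_deriv (by ring)
  have hnonneg : ∀ u ∈ Ioi t, 0 ≤ u * φ u := fun u hu =>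
    mul_nonneg (ht.trans hu).le (gaussianPDFReal_nonneg 0 1 u)
  have hlim : Tendsto (fun v => -φ v) atTop (𝓝 0) := by
    simpa using tendsto_gaussianPDFReal_zero_one_atTop.neg
  have hint := integrableOn_Ioi_deriv_of_nonneg' hderiv hnonneg hlim
  calc stdNormalTail t = ∫ u in Ioi t, φ u := stdNormalTail_eq_integral t
    _ ≤ ∫ u in Ioi t, u * φ u / t := by
        refine setIntegral_mono_on (integrable_gaussianPDFReal 0 1).integrableOn
          (hint.div_const t) measurableSet_Ioi fun u hu => ?_
        rw [le_div_iff₀ ht, mul_comm u]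
        exact mul_le_mul_of_nonneg_left (le_of_lt hu) (gaussianPDFReal_nonneg 0 1 u)
    _ = φ t / t := by
        rw [integral_div, integral_Ioi_of_hasDerivAt_of_nonneg' hderiv hnonneg hlim, zero_sub,
          neg_neg]

lemma abs_div_sq_add_one_le_one (u : ℝ) : |u / (u ^ 2 + 1)| ≤ 1 := by
  rw [abs_div, abs_of_pos (by positivity : (0 : ℝ) < u ^ 2 + 1), div_le_one (by positivity)]
  nlinarith [abs_nonneg u, sq_abs u]

lemma le_stdNormalTail (t : ℝ) : φ t * t / (t ^ 2 + 1) ≤ stdNormalTail t := by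
  set g' : ℝ → ℝ := fun u => φ u * ((u ^ 4 + 2 * u ^ 2 - 1) / (u ^ 2 + 1) ^ 2)
  have hg'_le : ∀ u, |g' u| ≤ φ u := fun u => by
    rw [abs_mul, abs_of_nonneg (gaussianPDFReal_nonneg 0 1 u)]
    refine mul_le_of_le_one_right (gaussianPDFReal_nonneg 0 1 u) ?_
    rw [abs_div, abs_of_pos (by positivity : (0 : ℝ) < (u ^ 2 + 1) ^ 2), div_le_one (by positivity),
      abs_le]
    constructor <;> nlinarith [sq_nonneg u, sq_nonneg (u ^ 2)]
  have hderiv : ∀ u ∈ Ici t, HasDerivAt (fun v => -(φ v * v / (v ^ 2 + 1))) (g' u) u := by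
    intro u _
    refine (((hasDerivAt_gaussianPDFReal_zero_one u).fun_mul (hasDerivAt_id u)).fun_div
      ((hasDerivAt_pow 2 u).add_const 1) (by positivity)).fun_neg.congr_deriv ?_
    simp only [g', id]
    field_simp
    ring
  have hint : IntegrableOn g' (Ioi t) :=
    ((integrable_gaussianPDFReal 0 1).mono'
      (by fun_prop) (ae_of_all _ fun u => (Real.norm_eq_abs _).trans_le (hg'_le u))).integrableOn
  have hlim : Tendsto (fun v => -(φ v * v / (v ^ 2 + 1))) atTop (𝓝 0) := by
    refine squeeze_zero_norm (fun v => ?_) tendsto_gaussianPDFReal_zero_one_atTop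
    rw [norm_neg, mul_div_assoc, norm_mul, Real.norm_eq_abs, Real.norm_eq_abs,
      abs_of_nonneg (gaussianPDFReal_nonneg 0 1 v)]
    exact mul_le_of_le_one_right (gaussianPDFReal_nonneg 0 1 v) (abs_div_sq_add_one_le_one v)
  calc φ t * t / (t ^ 2 + 1) = ∫ u in Ioi t, g' u := by
        rw [integral_Ioi_of_hasDerivAt_of_tendsto' hderiv hint hlim]; ring
    _ ≤ ∫ u in Ioi t, φ u :=
        setIntegral_mono_on hint (integrable_gaussianPDFReal 0 1).integrableOn measurableSet_Ioi
          fun u _ => (le_abs_self _).trans (hg'_le u)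
    _ = stdNormalTail t := (stdNormalTail_eq_integral t).symm

lemma stdNormalTail_pos {t : ℝ} (ht : 0 < t) : 0 < stdNormalTail t :=
  (div_pos (mul_pos (gaussianPDFReal_pos 0 1 t one_ne_zero) ht) (by positivity)).trans_le
    (le_stdNormalTail t)

lemma tendsto_sq_div_sq_add_one : Tendsto (fun t : ℝ => t ^ 2 / (t ^ 2 + 1)) atTop (𝓝 1) := by
  have h : Tendsto (fun t : ℝ => t ^ 2 + 1) atTop atTop :=
    tendsto_atTop_add_const_right _ 1 (tendsto_pow_atTop two_ne_zero)
  refine (by simpa using tendsto_const_nhds.sub h.inv_tendsto_atTop :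
    Tendsto (fun t : ℝ => 1 - (t ^ 2 + 1)⁻¹) atTop (𝓝 1)).congr fun t => ?_
  field_simp
  ring

/-- Mills' ratio. -/
theorem stdNormalTail_isEquivalent : stdNormalTail ~[atTop] fun t => φ t / t := by
  refine isEquivalent_of_tendsto_one (tendsto_of_tendsto_of_tendsto_of_le_of_le'
    tendsto_sq_div_sq_add_one tendsto_const_nhds ?_ ?_)
  all_goals
    filter_upwards [eventually_gt_atTop 0] with t ht
    have hφ := gaussianPDFReal_pos 0 1 t one_ne_zero
    simp only [Pi.div_apply]
  · rw [le_div_iff₀ (by positivity)]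
    calc t ^ 2 / (t ^ 2 + 1) * (φ t / t) = φ t * t / (t ^ 2 + 1) := by field_simp
      _ ≤ stdNormalTail t := le_stdNormalTail t
  · rw [div_le_one (by positivity)]
    exact stdNormalTail_le ht

/-- `d_p` as a function of `s = √(2 log p)`. -/
noncomputable def scaledGumbelCenter (s : ℝ) : ℝ := s - log (√(2 * π) * s) / s

noncomputable def gumbelLevel (c d : ℝ) : ℝ := d + c / d

lemma gumbelLevel_lt_gumbelLevel {c' c d : ℝ} (hd : 0 < d) (h : c' < c) :
    gumbelLevel c' d < gumbelLevel c d :=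
  add_lt_add_right (div_lt_div_of_pos_right h hd) d

lemma mul_sub_le_iff_le_gumbelLevel {c d z : ℝ} (hd : 0 < d) :
    d * (z - d) ≤ c ↔ z ≤ gumbelLevel c d := by
  rw [gumbelLevel, mul_comm, ← le_div_iff₀ hd, sub_le_iff_le_add, add_comm]

lemma mul_add_le_iff_gumbelLevel_neg_le {c d z : ℝ} (hd : 0 < d) :
    d * (z + d) ≤ c ↔ gumbelLevel (-c) d ≤ -z := by
  rw [gumbelLevel, mul_comm, ← le_div_iff₀ hd, neg_div]
  constructor <;> intro h <;> linarith

lemma gumbelCenter_eq_scaledGumbelCenter (k : ℕ) :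
    gumbelCenter k = scaledGumbelCenter √(2 * log k) := by
  rcases (Real.log_natCast_nonneg k).eq_or_lt with hL | hL
  · simp [gumbelCenter, scaledGumbelCenter, ← hL]
  have hs : 0 < √(2 * log k) := Real.sqrt_pos.2 (by positivity)
  have hlog : log (√(2 * π) * √(2 * log k)) = (log (4 * π) + log (log k)) / 2 := by
    rw [← Real.sqrt_mul (by positivity), Real.log_sqrt (by positivity),
      show 2 * π * (2 * log k) = 4 * π * log k by ring,
      Real.log_mul (by positivity) hL.ne']
  rw [gumbelCenter, scaledGumbelCenter, hlog]
  field_simp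
  ring

lemma tendsto_log_const_mul_div_self :
    Tendsto (fun s => log (√(2 * π) * s) / s) atTop (𝓝 0) := by
  have ha : 0 < √(2 * π) := by positivity
  have h := (isLittleO_log_id_atTop.tendsto_div_nhds_zero.comp
    (tendsto_id.const_mul_atTop ha)).const_mul √(2 * π)
  rw [mul_zero] at h
  refine h.congr' ?_
  filter_upwards [eventually_ne_atTop 0] with s hs
  simp only [Function.comp_apply, id]
  field_simp

lemma tendsto_scaledGumbelCenter_div_self :
    Tendsto (fun s => scaledGumbelCenter s / s) atTop (𝓝 1) := by
  have h := tendsto_const_nhds (x := (1 : ℝ)).sub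
    (tendsto_log_const_mul_div_self.mul tendsto_inv_atTop_zero)
  rw [mul_zero, sub_zero] at h
  refine h.congr' ?_
  filter_upwards [eventually_ne_atTop 0] with s hs
  simp only [scaledGumbelCenter]
  field_simp

lemma tendsto_scaledGumbelCenter_atTop : Tendsto scaledGumbelCenter atTop atTop := by
  refine (tendsto_id.atTop_add tendsto_log_const_mul_div_self.neg).congr fun s => ?_
  rw [scaledGumbelCenter, sub_eq_add_neg, id]

section GumbelLevel

variable (c : ℝ)

lemma tendsto_gumbelLevel_scaledGumbelCenter_atTop :
    Tendsto (fun s => gumbelLevel c (scaledGumbelCenter s)) atTop atTop :=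
  tendsto_scaledGumbelCenter_atTop.atTop_add
    (tendsto_const_nhds.div_atTop tendsto_scaledGumbelCenter_atTop)

lemma tendsto_self_div_gumbelLevel_scaledGumbelCenter :
    Tendsto (fun s => s / gumbelLevel c (scaledGumbelCenter s)) atTop (𝓝 1) := by
  have h := (tendsto_scaledGumbelCenter_div_self.add
    ((tendsto_const_nhds (x := c)).div_atTop
      (tendsto_scaledGumbelCenter_atTop.atTop_mul_atTop₀ tendsto_id))).inv₀ (by norm_num)
  rw [add_zero, inv_one] at h
  refine h.congr' ?_
  filter_upwards [eventually_gt_atTop 0,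
    tendsto_scaledGumbelCenter_atTop.eventually_gt_atTop 0] with s hs hD
  simp only [gumbelLevel, id]
  field_simp

lemma eventually_gumbelLevel_scaledGumbelCenter_lt :
    ∀ᶠ s in atTop, gumbelLevel c (scaledGumbelCenter s) < s := by
  have hlog : Tendsto (fun s => log (√(2 * π) * s)) atTop atTop :=
    tendsto_log_atTop.comp (tendsto_id.const_mul_atTop (by positivity))
  have h := (hlog.atTop_add (tendsto_log_const_mul_div_self.pow 2).neg).eventually_gt_atTop c
  filter_upwards [h, eventually_gt_atTop 0,
    tendsto_scaledGumbelCenter_atTop.eventually_gt_atTop 0] with s h hs hD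
  set D := scaledGumbelCenter s
  have hmul : log (√(2 * π) * s) / s * D = log (√(2 * π) * s) + -(log (√(2 * π) * s) / s) ^ 2 := by
    simp only [D, scaledGumbelCenter]
    field_simp
    ring
  have hsD : s - D = log (√(2 * π) * s) / s := by simp only [D, scaledGumbelCenter]; ring
  rw [← sub_pos, gumbelLevel, show s - (D + c / D) = ((s - D) * D - c) / D by field_simp; ring,
    hsD]
  exact div_pos (by linarith) hD

lemma exp_mul_gaussianPDFReal_gumbelLevel_div {s : ℝ} (hs : 0 < s)
    (hD : scaledGumbelCenter s ≠ 0) :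
    exp (s ^ 2 / 2) * (φ (gumbelLevel c (scaledGumbelCenter s)) /
      gumbelLevel c (scaledGumbelCenter s)) =
    s / gumbelLevel c (scaledGumbelCenter s) *
      exp (-(c + (log (√(2 * π) * s) / s) ^ 2 / 2 + (c / scaledGumbelCenter s) ^ 2 / 2)) := by
  set D := scaledGumbelCenter s
  set L := log (√(2 * π) * s)
  have hDs : D = s - L / s := rfl
  have hsq : s ^ 2 / 2 + -gumbelLevel c D ^ 2 / 2 =
      L + -(c + (L / s) ^ 2 / 2 + (c / D) ^ 2 / 2) := by
    have h1 : gumbelLevel c D ^ 2 = D ^ 2 + 2 * c + (c / D) ^ 2 := by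
      rw [gumbelLevel]; field_simp; ring
    have h2 : D ^ 2 = s ^ 2 - 2 * L + (L / s) ^ 2 := by
      rw [hDs]; field_simp; ring
    rw [h1, h2]; ring
  rw [gaussianPDFReal_zero_one]
  calc exp (s ^ 2 / 2) * ((√(2 * π))⁻¹ * exp (-gumbelLevel c D ^ 2 / 2) / gumbelLevel c D)
      = (√(2 * π))⁻¹ * exp (s ^ 2 / 2 + -gumbelLevel c D ^ 2 / 2) / gumbelLevel c D := by
        rw [exp_add]; ring
    _ = s / gumbelLevel c D * exp (-(c + (L / s) ^ 2 / 2 + (c / D) ^ 2 / 2)) := by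
        rw [hsq, exp_add, exp_log (by positivity)]
        field_simp

/-- The defining property of the centering `d_p`, in the variable `s = √(2 log p)`. -/
theorem tendsto_exp_mul_stdNormalTail_gumbelLevel :
    Tendsto (fun s => exp (s ^ 2 / 2) * stdNormalTail (gumbelLevel c (scaledGumbelCenter s)))
      atTop (𝓝 (exp (-c))) := by
  have hD := tendsto_scaledGumbelCenter_atTop
  have hlim : Tendsto (fun s => s / gumbelLevel c (scaledGumbelCenter s) *
      exp (-(c + (log (√(2 * π) * s) / s) ^ 2 / 2 + (c / scaledGumbelCenter s) ^ 2 / 2)))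
      atTop (𝓝 (exp (-c))) := by
    have h := (tendsto_self_div_gumbelLevel_scaledGumbelCenter c).mul
      ((continuous_exp.tendsto _).comp (((tendsto_const_nhds (x := c)).add
        ((tendsto_log_const_mul_div_self.pow 2).div_const 2)).add
        (((tendsto_const_nhds (x := c)).div_atTop hD).pow 2 |>.div_const 2)).neg)
    simpa using h
  have hequiv := (IsEquivalent.refl (u := fun s => exp (s ^ 2 / 2))).mul
    (stdNormalTail_isEquivalent.comp_tendsto (tendsto_gumbelLevel_scaledGumbelCenter_atTop c))
  refine hequiv.symm.tendsto_nhds (hlim.congr' ?_)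
  filter_upwards [eventually_gt_atTop 0, hD.eventually_gt_atTop 0] with s hs hDs
  exact (exp_mul_gaussianPDFReal_gumbelLevel_div c hs hDs.ne').symm

end GumbelLevel

lemma tendsto_sqrt_two_mul_log_natCast : Tendsto (fun k : ℕ => √(2 * log k)) atTop atTop :=
  tendsto_sqrt_atTop.comp
    ((tendsto_log_atTop.comp tendsto_natCast_atTop_atTop).const_mul_atTop two_pos)

lemma tendsto_gumbelCenter_atTop : Tendsto gumbelCenter atTop atTop := by
  rw [funext gumbelCenter_eq_scaledGumbelCenter]
  exact tendsto_scaledGumbelCenter_atTop.comp tendsto_sqrt_two_mul_log_natCast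

theorem tendsto_natCast_mul_stdNormalTail_gumbelLevel (c : ℝ) :
    Tendsto (fun k : ℕ => (k : ℝ) * stdNormalTail (gumbelLevel c (gumbelCenter k))) atTop
      (𝓝 (exp (-c))) := by
  refine ((tendsto_exp_mul_stdNormalTail_gumbelLevel c).comp
    tendsto_sqrt_two_mul_log_natCast).congr' ?_
  filter_upwards [eventually_ge_atTop 1] with k hk
  rw [Function.comp_apply, gumbelCenter_eq_scaledGumbelCenter,
    Real.sq_sqrt (by positivity), mul_div_cancel_left₀ _ two_ne_zero,
    exp_log (by exact_mod_cast hk)]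

lemma eventually_gumbelLevel_gumbelCenter_mem_Ioo (c : ℝ) :
    ∀ᶠ k : ℕ in atTop, gumbelLevel c (gumbelCenter k) ∈ Ioo 0 √(2 * log k) := by
  simp only [gumbelCenter_eq_scaledGumbelCenter]
  exact tendsto_sqrt_two_mul_log_natCast.eventually
    (((tendsto_gumbelLevel_scaledGumbelCenter_atTop c).eventually_gt_atTop 0).and
      (eventually_gumbelLevel_scaledGumbelCenter_lt c))

lemma tendsto_one_sub_pow_of_tendsto_mul {α : Type*} {l : Filter α} {p : α → ℕ} {a : α → ℝ}
    {c : ℝ} (hp : Tendsto p l atTop) (ha : Tendsto (fun n => (p n : ℝ) * a n) l (𝓝 c)) :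
    Tendsto (fun n => (1 - a n) ^ p n) l (𝓝 (exp (-c))) := by
  have hp' : Tendsto (fun n => (p n : ℝ)) l atTop := tendsto_natCast_atTop_atTop.comp hp
  have ha0 : Tendsto a l (𝓝 0) := by
    have h := ha.mul hp'.inv_tendsto_atTop
    rw [mul_zero] at h
    refine h.congr' ?_
    filter_upwards [hp'.eventually_gt_atTop 0] with n hn
    simp only [Pi.inv_apply]
    field_simp
  have hpos : ∀ᶠ n in l, 0 < 1 - a n :=
    (tendsto_const_nhds.sub ha0).eventually (eventually_gt_nhds (by norm_num : (0 : ℝ) < 1 - 0))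
  -- `1 - x⁻¹ ≤ log x ≤ x - 1` squeezes `p log (1 - a)` between `-p a / (1 - a)` and `-p a`.
  have hlog : Tendsto (fun n => p n * log (1 - a n)) l (𝓝 (-c)) := by
    have hlow : Tendsto (fun n => -(p n * a n) / (1 - a n)) l (𝓝 (-c)) := by
      simpa [Pi.div_def] using
        ha.neg.div (tendsto_const_nhds.sub ha0) (by norm_num : (1 : ℝ) - 0 ≠ 0)
    refine tendsto_of_tendsto_of_tendsto_of_le_of_le' hlow ha.neg ?_ ?_
    all_goals filter_upwards [hpos] with n hn
    · calc -(p n * a n) / (1 - a n) = p n * (1 - (1 - a n)⁻¹) := by field_simp; ring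
        _ ≤ p n * log (1 - a n) :=
          mul_le_mul_of_nonneg_left (one_sub_inv_le_log_of_pos hn) (Nat.cast_nonneg _)
    · calc p n * log (1 - a n) ≤ p n * (1 - a n - 1) :=
            mul_le_mul_of_nonneg_left (log_le_sub_one_of_pos hn) (Nat.cast_nonneg _)
        _ = -(p n * a n) := by ring
  refine ((continuous_exp.tendsto _).comp hlog).congr' ?_
  filter_upwards [hpos] with n hn
  rw [Function.comp_apply, ← log_pow, exp_log (pow_pos hn _)]

lemma tendsto_of_le_of_forall_lt_le {α : Type*} {l : Filter α} {f : α → ℝ} {g : ℝ → α → ℝ}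
    {F : ℝ → ℝ} {c : ℝ} (hF : ContinuousAt F c) (hg : ∀ c', Tendsto (g c') l (𝓝 (F c')))
    (hlow : ∀ᶠ n in l, g c n ≤ f n) (hup : ∀ c' < c, ∀ᶠ n in l, f n ≤ g c' n) :
    Tendsto f l (𝓝 (F c)) := by
  refine tendsto_order.2 ⟨fun b hb => ?_, fun b hb => ?_⟩
  · filter_upwards [(hg c).eventually (eventually_gt_nhds hb), hlow] with n h1 h2
    exact h1.trans_le h2
  · obtain ⟨c', hc', hFc'⟩ := (hF.eventually (eventually_lt_nhds hb)).exists_lt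
    filter_upwards [hup c' hc', (hg c').eventually (eventually_lt_nhds hFc')] with n h1 h2
    exact h1.trans_lt h2

section Sequences

variable {γ : ℕ → ℝ} {p : ℕ → ℕ}

lemma eventually_gumbelLevel_mem_Ioo (hγ : Tendsto γ atTop atTop) (hp : Tendsto p atTop atTop)
    (hpγ : ∀ n, (p n : ℝ) < exp (γ n ^ 2 / 2)) (c : ℝ) :
    ∀ᶠ n in atTop, gumbelLevel c (gumbelCenter (p n)) ∈ Ioo 0 (γ n) := by
  filter_upwards [hp.eventually (eventually_gumbelLevel_gumbelCenter_mem_Ioo c),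
    hγ.eventually_gt_atTop 0, hp.eventually_ge_atTop 1] with n ⟨h0, hlt⟩ hγn hpn
  refine ⟨h0, hlt.trans ?_⟩
  have := (log_lt_iff_lt_exp (by exact_mod_cast hpn)).2 (hpγ n)
  rw [Real.sqrt_lt' hγn]
  linarith

theorem tendsto_mul_apply_gumbelLevel {f : ℕ → ℝ → ℝ}
    (hf : ∀ δ > (0 : ℝ), ∀ᶠ n in atTop, ∀ x : ℝ, 0 ≤ x → x < γ n →
      |f n x / stdNormalTail x - 1| < δ)
    (hγ : Tendsto γ atTop atTop) (hp : Tendsto p atTop atTop)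
    (hpγ : ∀ n, (p n : ℝ) < exp (γ n ^ 2 / 2)) (c : ℝ) :
    Tendsto (fun n => (p n : ℝ) * f n (gumbelLevel c (gumbelCenter (p n)))) atTop
      (𝓝 (exp (-c))) := by
  have hmem := eventually_gumbelLevel_mem_Ioo hγ hp hpγ c
  have hratio : Tendsto (fun n => f n (gumbelLevel c (gumbelCenter (p n))) /
      stdNormalTail (gumbelLevel c (gumbelCenter (p n)))) atTop (𝓝 1) :=
    Metric.tendsto_nhds.2 fun δ hδ => by
      filter_upwards [hf δ hδ, hmem] with n h ht
      exact h _ ht.1.le ht.2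
  have h := ((tendsto_natCast_mul_stdNormalTail_gumbelLevel c).comp hp).mul hratio
  rw [mul_one] at h
  refine h.congr' ?_
  filter_upwards [hmem] with n ht
  have := (stdNormalTail_pos ht.1).ne'
  simp only [Function.comp_apply]
  field_simp

theorem tendsto_mul_measureReal_gumbelLevel_le {Ω : Type*} [MeasurableSpace Ω] {μ : Measure Ω}
    [IsFiniteMeasure μ] {Z : ℕ → Ω → ℝ} (hp : Tendsto p atTop atTop)
    (hZ : ∀ c, Tendsto
      (fun n => (p n : ℝ) * μ.real {ω | gumbelLevel c (gumbelCenter (p n)) < Z n ω})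
      atTop (𝓝 (exp (-c)))) (c : ℝ) :
    Tendsto (fun n => (p n : ℝ) * μ.real {ω | gumbelLevel c (gumbelCenter (p n)) ≤ Z n ω}) atTop
      (𝓝 (exp (-c))) := by
  refine tendsto_of_le_of_forall_lt_le (F := fun c => exp (-c)) (by fun_prop) hZ
    (Eventually.of_forall fun n => ?_) fun c' hc' => ?_
  · exact mul_le_mul_of_nonneg_left (measureReal_mono (ofPred_subset_ofPred.2 fun _ => le_of_lt))
      (Nat.cast_nonneg _)
  · filter_upwards [(tendsto_gumbelCenter_atTop.comp hp).eventually_gt_atTop 0] with n hd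
    exact mul_le_mul_of_nonneg_left (measureReal_mono (ofPred_subset_ofPred.2 fun _ =>
      (gumbelLevel_lt_gumbelLevel hd hc').trans_le)) (Nat.cast_nonneg _)

end Sequences

section IID

variable {Ω : Type*} [MeasurableSpace Ω] {μ : Measure Ω}
  {T : ℕ → Ω → ℝ} {W : Ω → ℝ}

lemma measureReal_biInter_preimage (hindep : iIndepFun T μ)
    (hident : ∀ i, IdentDistrib (T i) W μ μ) {C : Set ℝ} (hC : MeasurableSet C) (m : ℕ) :
    μ.real (⋂ i ∈ Finset.range m, T i ⁻¹' C) = μ.real (W ⁻¹' C) ^ m := by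
  simp only [measureReal_def]
  rw [hindep.meas_biInter fun i _ => ⟨C, hC, rfl⟩,
    Finset.prod_congr rfl fun i _ => (hident i).measure_mem_eq hC, Finset.prod_const,
    Finset.card_range, ENNReal.toReal_pow]

/-- The event is `{all Tᵢ ∈ A} \ {all Tᵢ ∈ A \ B}`; by independence both have product measures. -/
theorem measureReal_forall_mem_and_exists_mem [IsProbabilityMeasure μ] (hindep : iIndepFun T μ)
    (hident : ∀ i, IdentDistrib (T i) W μ μ) {A B : Set ℝ} (hA : MeasurableSet A)
    (hB : MeasurableSet B) (hBA : B ⊆ A) (m : ℕ) :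
    μ.real {ω | (∀ i < m, T i ω ∈ A) ∧ ∃ i < m, T i ω ∈ B} =
      (1 - μ.real (W ⁻¹' Aᶜ)) ^ m - (1 - (μ.real (W ⁻¹' Aᶜ) + μ.real (W ⁻¹' B))) ^ m := by
  have hW : AEMeasurable W μ := (hident 0).aemeasurable_snd
  have hunion : (⋂ i ∈ Finset.range m, T i ⁻¹' A) =
      {ω | (∀ i < m, T i ω ∈ A) ∧ ∃ i < m, T i ω ∈ B} ∪ ⋂ i ∈ Finset.range m, T i ⁻¹' (A \ B) := by
    ext ω
    simp only [mem_iInter, mem_union, mem_ofPred_eq, Finset.mem_range, mem_preimage, Set.mem_sdiff]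
    grind
  have hdisj : Disjoint {ω | (∀ i < m, T i ω ∈ A) ∧ ∃ i < m, T i ω ∈ B}
      (⋂ i ∈ Finset.range m, T i ⁻¹' (A \ B)) := by
    refine Set.disjoint_left.2 fun ω ⟨_, i, hi, hiB⟩ hall => ?_
    exact (mem_iInter₂.1 hall i (Finset.mem_range.2 hi)).2 hiB
  have hnull : NullMeasurableSet (⋂ i ∈ Finset.range m, T i ⁻¹' (A \ B)) μ :=
    .biInter (Finset.range m).countable_toSet fun i _ =>
      (hident i).aemeasurable_fst.nullMeasurable (hA.diff hB)
  have hA' : μ.real (W ⁻¹' A) = 1 - μ.real (W ⁻¹' Aᶜ) := by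
    rw [preimage_compl, probReal_compl_eq_one_sub₀ (hW.nullMeasurable hA), sub_sub_cancel]
  have hAB : μ.real (W ⁻¹' (A \ B)) = 1 - (μ.real (W ⁻¹' Aᶜ) + μ.real (W ⁻¹' B)) := by
    have hset : W ⁻¹' (A \ B) = (W ⁻¹' Aᶜ ∪ W ⁻¹' B)ᶜ := by
      rw [← preimage_union, ← preimage_compl, compl_union, compl_compl, sdiff_eq, inter_comm]
    rw [hset, probReal_compl_eq_one_sub₀ ((hW.nullMeasurable hA.compl).union
      (hW.nullMeasurable hB)), measureReal_union₀ (hW.nullMeasurable hB)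
      (Disjoint.preimage W (disjoint_compl_left.mono_right hBA)).aedisjoint]
  have h := measureReal_union₀ hnull hdisj.aedisjoint (μ := μ)
  rw [← hunion, measureReal_biInter_preimage hindep hident hA,
    measureReal_biInter_preimage hindep hident (hA.diff hB), hA', hAB] at h
  linarith

theorem measureReal_scaled_max_le_and_min_le [IsProbabilityMeasure μ] (hindep : iIndepFun T μ)
    (hident : ∀ i, IdentDistrib (T i) W μ μ) {σ d x y : ℝ} (hd : 0 < d)
    (hx : 0 < gumbelLevel x d) (hy : 0 < gumbelLevel (-y) d) (m : ℕ) :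
    μ.real {ω | (∀ i < m, d * (T i ω / σ - d) ≤ x) ∧ ∃ i < m, d * (T i ω / σ + d) ≤ y} =
      (1 - μ.real {ω | gumbelLevel x d < W ω / σ}) ^ m -
        (1 - (μ.real {ω | gumbelLevel x d < W ω / σ} +
          μ.real {ω | gumbelLevel (-y) d ≤ -(W ω / σ)})) ^ m := by
  have hBA : {v : ℝ | gumbelLevel (-y) d ≤ -(v / σ)} ⊆ {v | v / σ ≤ gumbelLevel x d} :=
    ofPred_subset_ofPred.2 fun v hv => by linarith
  have h := measureReal_forall_mem_and_exists_mem hindep hident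
    (measurableSet_le (by fun_prop) measurable_const)
    (measurableSet_le measurable_const (by fun_prop)) hBA m
  simp only [compl_ofPred, preimage_ofPred_eq, mem_ofPred_eq, not_le] at h
  simpa only [mul_sub_le_iff_le_gumbelLevel hd, mul_add_le_iff_gumbelLevel_neg_le hd] using h

end IID

lemma gumbelCDF_mul_one_sub_gumbelCDF_neg (x y : ℝ) :
    gumbelCDF x * (1 - gumbelCDF (-y)) = exp (-exp (-x)) - exp (-(exp (-x) + exp y)) := by
  rw [gumbelCDF, gumbelCDF, neg_neg, mul_sub, mul_one, ← exp_add, neg_add]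

theorem stmt9_general {Ω : Type*} [MeasureSpace Ω] [IsProbabilityMeasure (ℙ : Measure Ω)]
    (X : ℕ → Ω → ℝ)
    (γ : ℕ → ℝ) (hγ : Tendsto γ atTop atTop)
    (hLDplus : ∀ δ > (0 : ℝ), ∀ᶠ n : ℕ in atTop, ∀ x : ℝ, 0 ≤ x → x < γ n →
      |(ℙ {ω | x < partialSum X n ω / Real.sqrt n}).toReal / stdNormalTail x - 1| < δ)
    (hLDminus : ∀ δ > (0 : ℝ), ∀ᶠ n : ℕ in atTop, ∀ x : ℝ, 0 ≤ x → x < γ n →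
      |(ℙ {ω | x < -(partialSum X n ω / Real.sqrt n)}).toReal / stdNormalTail x - 1| < δ)
    (p : ℕ → ℕ) (hp : Tendsto p atTop atTop)
    (hpγ : ∀ n, (p n : ℝ) < Real.exp (γ n ^ 2 / 2))
    -- `(S n i)_{i < p n}` are i.i.d. copies of `S_n = partialSum X n`:
    (S : ℕ → ℕ → Ω → ℝ)
    (hSindep : ∀ n, iIndepFun (S n) ℙ)
    (hSident : ∀ n i, IdentDistrib (S n i) (partialSum X n) ℙ ℙ) :
    ∀ x y : ℝ,
      Tendsto (fun n : ℕ =>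
          (ℙ {ω |
              (∀ i < p n,
                gumbelCenter (p n) * (S n i ω / Real.sqrt n - gumbelCenter (p n)) ≤ x) ∧
              (∃ i < p n,
                gumbelCenter (p n) * (S n i ω / Real.sqrt n + gumbelCenter (p n)) ≤ y)}).toReal)
        atTop (𝓝 (gumbelCDF x * (1 - gumbelCDF (-y)))) := by
  intro x y
  have ha := tendsto_mul_apply_gumbelLevel hLDplus hγ hp hpγ x
  have hb := tendsto_mul_measureReal_gumbelLevel_le hp
    (tendsto_mul_apply_gumbelLevel hLDminus hγ hp hpγ) (-y)
  rw [neg_neg] at hb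
  rw [gumbelCDF_mul_one_sub_gumbelCDF_neg]
  have hab := (ha.add hb).congr fun n => (mul_add _ _ _).symm
  refine ((tendsto_one_sub_pow_of_tendsto_mul hp ha).sub
    (tendsto_one_sub_pow_of_tendsto_mul hp hab)).congr' ?_
  filter_upwards [(tendsto_gumbelCenter_atTop.comp hp).eventually_gt_atTop 0,
    eventually_gumbelLevel_mem_Ioo hγ hp hpγ x, eventually_gumbelLevel_mem_Ioo hγ hp hpγ (-y)]
    with n hd hx hy
  rw [Function.comp_apply] at hd
  exact (measureReal_scaled_max_le_and_min_le (hSindep n) (hSident n) hd hx.1 hy.1 (p n)).symm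

/-- Under the two-sided normal large deviation approximation, for
`p_n → ∞` with `p_n < exp(γ_n²/2)` and i.i.d. copies `(S_{ni})_{i<p}` of `S_n`,
`P(max_{i<p} d_p(S_{ni}/√n − d_p) ≤ x, min_{i<p} d_p(S_{ni}/√n + d_p) ≤ y)
  → Λ(x)(1 − Λ(−y))` for all `x, y ∈ ℝ`. -/
theorem stmt9 {Ω : Type*} [MeasureSpace Ω] [IsProbabilityMeasure (ℙ : Measure Ω)]
    (X : ℕ → Ω → ℝ) (hmeas : ∀ i, Measurable (X i))
    (hindep : iIndepFun X ℙ)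
    (hident : ∀ i, IdentDistrib (X i) (X 0) ℙ ℙ)
    (hint : Integrable (X 0) ℙ)
    (hmean : ∫ ω, X 0 ω ∂ℙ = 0)
    (hvar : variance (X 0) ℙ = 1)
    (γ : ℕ → ℝ) (hγ : Tendsto γ atTop atTop)
    (hLDplus : ∀ δ > (0 : ℝ), ∀ᶠ n : ℕ in atTop, ∀ x : ℝ, 0 ≤ x → x < γ n →
      |(ℙ {ω | x < partialSum X n ω / Real.sqrt n}).toReal / stdNormalTail x - 1| < δ)
    (hLDminus : ∀ δ > (0 : ℝ), ∀ᶠ n : ℕ in atTop, ∀ x : ℝ, 0 ≤ x → x < γ n →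
      |(ℙ {ω | x < -(partialSum X n ω / Real.sqrt n)}).toReal / stdNormalTail x - 1| < δ)
    (p : ℕ → ℕ) (hp : Tendsto p atTop atTop)
    (hpγ : ∀ n, (p n : ℝ) < Real.exp (γ n ^ 2 / 2))
    -- `(S n i)_{i < p n}` are i.i.d. copies of `S_n = partialSum X n`:
    (S : ℕ → ℕ → Ω → ℝ)
    (hSindep : ∀ n, iIndepFun (S n) ℙ)
    (hSident : ∀ n i, IdentDistrib (S n i) (partialSum X n) ℙ ℙ) :
    ∀ x y : ℝ,
      Tendsto (fun n : ℕ =>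
          (ℙ {ω |
              (∀ i < p n,
                gumbelCenter (p n) * (S n i ω / Real.sqrt n - gumbelCenter (p n)) ≤ x) ∧
              (∃ i < p n,
                gumbelCenter (p n) * (S n i ω / Real.sqrt n + gumbelCenter (p n)) ≤ y)}).toReal)
        atTop (𝓝 (gumbelCDF x * (1 - gumbelCDF (-y)))) :=
  stmt9_general X γ hγ hLDplus hLDminus p hp hpγ S hSindep hSident
end

section
/- Let (P_n) be a sequence of positive integer-valued random variables and (p_n) a sequence of positive reals with p_n → ∞ such that P_n/p_n → 1 in probability. Let (q_n) be real numbers with q_n ∈ [0,1] for all n and q_n^{p_n} → L as n → ∞ for some L ∈ (0,1]. Then E[ q_n^{P_n} ] → L as n → ∞. -/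
open MeasureTheory ProbabilityTheory Filter Topology Real

/-! Writing `q ^ N = (q ^ p) ^ (N / p)` and using that `(a, x) ↦ a ^ x` is continuous wherever
`x > 0`, we get `q_n ^ {P_n} → L` along every subsequence on which `P_n / p_n → 1` almost surely.
Such subsequences exist inside every subsequence, and bounded convergence turns the a.s. limits
into limits of expectations. -/

theorem tendsto_pow_of_tendsto_rpow_of_tendsto_div {ι : Type*} {l : Filter ι} {q p : ι → ℝ}
    {N : ι → ℕ} {a : ℝ} (hq : ∀ i, 0 ≤ q i) (hp : ∀ i, p i ≠ 0)
    (hqa : Tendsto (fun i => q i ^ p i) l (𝓝 a)) (hN : Tendsto (fun i => (N i : ℝ) / p i) l (𝓝 1)) :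
    Tendsto (fun i => q i ^ N i) l (𝓝 a) := by
  have hpow : ∀ i, q i ^ N i = (q i ^ p i) ^ ((N i : ℝ) / p i) := fun i => by
    rw [← rpow_mul (hq i), mul_div_cancel₀ _ (hp i), rpow_natCast]
  simpa only [hpow, rpow_one] using hqa.rpow hN (Or.inr one_pos)

theorem tendsto_integral_pow_of_ae_tendsto_div {Ω ι : Type*} [MeasurableSpace Ω] {μ : Measure Ω}
    [IsFiniteMeasure μ] {l : Filter ι} [l.IsCountablyGenerated] {N : ι → Ω → ℕ}
    (hNmeas : ∀ i, Measurable (N i)) {q p : ι → ℝ} {a : ℝ} (hq : ∀ i, q i ∈ Set.Icc (0 : ℝ) 1)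
    (hp : ∀ i, p i ≠ 0) (hqa : Tendsto (fun i => q i ^ p i) l (𝓝 a))
    (hN : ∀ᵐ ω ∂μ, Tendsto (fun i => (N i ω : ℝ) / p i) l (𝓝 1)) :
    Tendsto (fun i => ∫ ω, q i ^ N i ω ∂μ) l (𝓝 (μ.real Set.univ * a)) := by
  have hbound : ∀ i, ∀ᵐ ω ∂μ, ‖q i ^ N i ω‖ ≤ 1 := fun i => ae_of_all _ fun ω => by
    rw [norm_pow, norm_of_nonneg (hq i).1]
    exact pow_le_one₀ (hq i).1 (hq i).2
  have hlim := tendsto_integral_filter_of_dominated_convergence (fun _ => (1 : ℝ))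
    (Eventually.of_forall fun i => ((measurable_from_top.comp (hNmeas i) :
      Measurable fun ω => q i ^ N i ω).aestronglyMeasurable))
    (Eventually.of_forall hbound) (integrable_const 1)
    (hN.mono fun ω hω => tendsto_pow_of_tendsto_rpow_of_tendsto_div (fun i => (hq i).1) hp hqa hω)
  rwa [integral_const, smul_eq_mul] at hlim

theorem stmt19_general {Ω : Type*} [MeasureSpace Ω] [IsProbabilityMeasure (ℙ : Measure Ω)]
    (P : ℕ → Ω → ℕ) (hPmeas : ∀ n, Measurable (P n))
    (p : ℕ → ℝ) (hppos : ∀ n, 0 < p n)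
    (hPp : TendstoInMeasure ℙ (fun n ω => (P n ω : ℝ) / p n) atTop (fun _ => 1))
    (q : ℕ → ℝ) (hq : ∀ n, q n ∈ Set.Icc (0 : ℝ) 1)
    (l : ℝ)
    (hql : Tendsto (fun n => q n ^ p n) atTop (𝓝 l)) :
    Tendsto (fun n => ∫ ω, q n ^ P n ω ∂ℙ) atTop (𝓝 l) := by
  refine tendsto_of_subseq_tendsto fun ns hns => ?_
  obtain ⟨ms, hms, hae⟩ := (hPp.comp hns).exists_seq_tendsto_ae
  refine ⟨ms, ?_⟩
  simpa only [probReal_univ, one_mul] using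
    tendsto_integral_pow_of_ae_tendsto_div (fun i => hPmeas _) (fun i => hq _)
      (fun i => (hppos _).ne') ((hql.comp hns).comp hms.tendsto_atTop) hae

/-- Let `(P_n)` be positive integer-valued random variables and
`(p_n)` positive reals with `p_n → ∞` and `P_n/p_n → 1` in probability. If
`q_n ∈ [0,1]` and `q_n^{p_n} → L ∈ (0,1]`, then `E[q_n^{P_n}] → L`. -/
theorem stmt19 {Ω : Type*} [MeasureSpace Ω] [IsProbabilityMeasure (ℙ : Measure Ω)]
    (P : ℕ → Ω → ℕ) (hPmeas : ∀ n, Measurable (P n)) (hPpos : ∀ n ω, 0 < P n ω)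
    (p : ℕ → ℝ) (hppos : ∀ n, 0 < p n) (hp : Tendsto p atTop atTop)
    (hPp : TendstoInMeasure ℙ (fun n ω => (P n ω : ℝ) / p n) atTop (fun _ => 1))
    (q : ℕ → ℝ) (hq : ∀ n, q n ∈ Set.Icc (0 : ℝ) 1)
    (l : ℝ) (hl : l ∈ Set.Ioc (0 : ℝ) 1)
    (hql : Tendsto (fun n => q n ^ p n) atTop (𝓝 l)) :
    Tendsto (fun n => ∫ ω, q n ^ P n ω ∂ℙ) atTop (𝓝 l) :=
  stmt19_general P hPmeas p hppos hPp q hq l hql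
end
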